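/- Let h : [0,T] → ℝ have finite p-variation for some p ≥ 1 and let Δ = T/M. Then ∫_0^{T−Δ} |h((t)_Δ + Δ) − h(t)| dt ≤ ‖h‖_{p-var,T} · T^{(p−1)/p} · Δ^{1/p}. -/

import Mathlib

/-!
For `r ∈ (0, Δ)` the points `0 < r < Δ < Δ + r < 2Δ < ⋯ < (M-1)Δ + r < MΔ = T` form a partition
of `[0, T]`, so the `M` increments `|h((k+1)Δ) - h(kΔ + r)|` have `ℓᵖ`-norm at most `‖h‖_{p-var}`
and, by Hölder, sum to at most `M^{(p-1)/p} ‖h‖_{p-var}`. On `[kΔ, (k+1)Δ)` the integrand is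
`|h((k+1)Δ) - h(t)|`, so folding `[0, T - Δ]` onto `[0, Δ]` through `t = kΔ + r` and integrating
this bound over `r` gives `Δ M^{(p-1)/p} ‖h‖_{p-var} = ‖h‖_{p-var} T^{(p-1)/p} Δ^{1/p}`.
-/

open MeasureTheory

/-- The set of candidate values `(∑ |h(t_{i+1})−h(t_i)|^p)^{1/p}` over finite
partitions `0 = t_0 < t_1 < ... < t_n = T` of `[0,T]`. -/
def pVarSet (p T : ℝ) (h : ℝ → ℝ) : Set ℝ :=
  {v : ℝ | ∃ (n : ℕ) (t : ℕ → ℝ), 0 < n ∧ t 0 = 0 ∧ t n = T ∧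
    (∀ i < n, t i < t (i + 1)) ∧
    v = (∑ i ∈ Finset.range n, |h (t (i + 1)) - h (t i)| ^ p) ^ (1 / p)}

/-- The `p`-variation seminorm of `h` on `[0,T]`. -/
noncomputable def pVarNorm (p T : ℝ) (h : ℝ → ℝ) : ℝ := sSup (pVarSet p T h)

open Finset

theorem intervalIntegral_eq_integral_sum_comp_add {E : Type*} [NormedAddCommGroup E]
    [NormedSpace ℝ E] {f : ℝ → E} {Δ : ℝ} (hΔ : 0 ≤ Δ) (N : ℕ)
    (hf : IntervalIntegrable f volume 0 (N * Δ)) :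
    ∫ t in 0..N * Δ, f t = ∫ r in 0..Δ, ∑ k ∈ range N, f (k * Δ + r) := by
  have hpiece : ∀ k < N, IntervalIntegrable f volume (k * Δ) ((k + 1 : ℕ) * Δ) := by
    intro k hk
    refine hf.mono_set ?_
    rw [Set.uIcc_of_le (by gcongr; omega), Set.uIcc_of_le (by positivity)]
    exact Set.Icc_subset_Icc (by positivity) (by gcongr; exact_mod_cast hk)
  have hshift : ∀ k < N, IntervalIntegrable (fun r ↦ f (k * Δ + r)) volume 0 Δ := by
    intro k hk
    convert (hpiece k hk).comp_add_left (k * Δ) using 1 <;> push_cast <;> ring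
  calc ∫ t in 0..N * Δ, f t
      = ∑ k ∈ range N, ∫ t in k * Δ..(k + 1 : ℕ) * Δ, f t := by
        simpa using (intervalIntegral.sum_integral_adjacent_intervals hpiece).symm
    _ = ∑ k ∈ range N, ∫ r in 0..Δ, f (k * Δ + r) := by
        refine sum_congr rfl fun k _ ↦ ?_
        rw [intervalIntegral.integral_comp_add_left]
        push_cast
        ring_nf
    _ = ∫ r in 0..Δ, ∑ k ∈ range N, f (k * Δ + r) :=
        (intervalIntegral.integral_finsetSum fun k hk ↦ hshift k (mem_range.mp hk)).symm

theorem norm_integral_le_of_norm_le_const_on_Ioo {E : Type*} [NormedAddCommGroup E]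
    [NormedSpace ℝ E] {f : ℝ → E} {a b C : ℝ} (hab : a ≤ b) (h : ∀ x ∈ Set.Ioo a b, ‖f x‖ ≤ C) :
    ‖∫ x in a..b, f x‖ ≤ (b - a) * C := by
  refine (intervalIntegral.norm_integral_le_of_norm_le (g := fun _ ↦ C) hab ?_
    intervalIntegrable_const).trans_eq (by rw [intervalIntegral.integral_const, smul_eq_mul])
  filter_upwards [volume.ae_ne b] with x hxb hx
  exact h x ⟨hx.1, lt_of_le_of_ne hx.2 hxb⟩

theorem floor_natCast_mul_add_div {Δ r : ℝ} (hr : r ∈ Set.Ico 0 Δ) (k : ℕ) :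
    ⌊(k * Δ + r) / Δ⌋ = k := by
  have hΔ : 0 < Δ := hr.1.trans_lt hr.2
  have hr' : r / Δ ∈ Set.Ico (0 : ℝ) 1 :=
    ⟨div_nonneg hr.1 hΔ.le, (div_lt_one hΔ).mpr hr.2⟩
  rw [add_div, mul_div_cancel_right₀ _ hΔ.ne', Int.floor_natCast_add,
    Int.floor_eq_zero_iff.mpr hr', add_zero]

theorem mul_rpow_sub_one_div {p a Δ : ℝ} (hp : p ≠ 0) (ha : 0 ≤ a) (hΔ : 0 < Δ) :
    Δ * a ^ ((p - 1) / p) = (a * Δ) ^ ((p - 1) / p) * Δ ^ (1 / p) := by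
  rw [Real.mul_rpow ha hΔ.le, mul_assoc, ← Real.rpow_add hΔ,
    show (p - 1) / p + 1 / p = 1 by field_simp; ring, Real.rpow_one, mul_comm]

section pVariation

variable {p T : ℝ} {h : ℝ → ℝ}

theorem pVarNorm_nonneg (hT : 0 < T) (hvar : BddAbove (pVarSet p T h)) : 0 ≤ pVarNorm p T h := by
  have hmem : (∑ i ∈ range 1, |h ((i + 1 : ℕ) * T) - h (i * T)| ^ p) ^ (1 / p) ∈ pVarSet p T h :=
    ⟨1, fun i ↦ i * T, one_pos, by simp, by simp, fun i hi ↦ by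
      obtain rfl : i = 0 := by omega
      simpa using hT, rfl⟩
  exact (Real.rpow_nonneg (sum_nonneg fun _ _ ↦ by positivity) _).trans (le_csSup hvar hmem)

theorem sum_rpow_le_pVarNorm_rpow (hp : 0 < p) (hvar : BddAbove (pVarSet p T h))
    {n : ℕ} {t : ℕ → ℝ} (hn : 0 < n) (ht0 : t 0 = 0) (htn : t n = T)
    (ht : ∀ i < n, t i < t (i + 1)) {s : Finset ℕ} (hs : s ⊆ range n) :
    ∑ i ∈ s, |h (t (i + 1)) - h (t i)| ^ p ≤ pVarNorm p T h ^ p := by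
  have hsum : 0 ≤ ∑ i ∈ range n, |h (t (i + 1)) - h (t i)| ^ p :=
    sum_nonneg fun _ _ ↦ by positivity
  calc ∑ i ∈ s, |h (t (i + 1)) - h (t i)| ^ p
      ≤ ∑ i ∈ range n, |h (t (i + 1)) - h (t i)| ^ p :=
        sum_le_sum_of_subset_of_nonneg hs fun _ _ _ ↦ by positivity
    _ = ((∑ i ∈ range n, |h (t (i + 1)) - h (t i)| ^ p) ^ (1 / p)) ^ p := by
        rw [one_div, Real.rpow_inv_rpow hsum hp.ne']
    _ ≤ pVarNorm p T h ^ p := by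
        gcongr
        exact le_csSup hvar ⟨n, t, hn, ht0, htn, ht, rfl⟩

variable {M : ℕ} {Δ r : ℝ}

theorem sum_rpow_abs_sub_shiftedGrid_le (hp : 0 < p) (hM : 0 < M)
    (hvar : BddAbove (pVarSet p (M * Δ) h)) (hr : r ∈ Set.Ioo 0 Δ) :
    ∑ k ∈ range M, |h ((k + 1) * Δ) - h (k * Δ + r)| ^ p ≤ pVarNorm p (M * Δ) h ^ p := by
  set t : ℕ → ℝ := fun i ↦ (i / 2 : ℕ) * Δ + (i % 2 : ℕ) * r
  have ht_even (k : ℕ) : t (2 * k) = k * Δ := by simp [t]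
  have ht_odd (k : ℕ) : t (2 * k + 1) = k * Δ + r := by simp [t, Nat.add_mod, Nat.add_div]
  have ht_succ_odd (k : ℕ) : t (2 * k + 1 + 1) = (k + 1) * Δ := by
    rw [show 2 * k + 1 + 1 = 2 * (k + 1) by ring, ht_even]
    push_cast
    ring
  have ht : ∀ i < 2 * M, t i < t (i + 1) := by
    intro i _
    obtain ⟨k, rfl | rfl⟩ := Nat.even_or_odd' i
    · rw [ht_even, ht_odd]
      linarith [hr.1]
    · rw [ht_succ_odd, ht_odd]
      linarith [hr.2]
  calc ∑ k ∈ range M, |h ((k + 1) * Δ) - h (k * Δ + r)| ^ p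
      = ∑ k ∈ range M, |h (t (2 * k + 1 + 1)) - h (t (2 * k + 1))| ^ p := by
        simp only [ht_succ_odd, ht_odd]
    _ = ∑ i ∈ (range M).image (fun k ↦ 2 * k + 1), |h (t (i + 1)) - h (t i)| ^ p := by
        rw [sum_image fun _ _ _ _ hab ↦ by omega]
    _ ≤ pVarNorm p (M * Δ) h ^ p :=
        sum_rpow_le_pVarNorm_rpow hp hvar (by omega) (by simpa using ht_even 0) (ht_even M) ht
          fun i hi ↦ by
            obtain ⟨k, hk, rfl⟩ := mem_image.mp hi
            rw [mem_range] at hk ⊢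
            omega

theorem sum_abs_sub_shiftedGrid_le (hp : 1 ≤ p) (hM : 0 < M)
    (hvar : BddAbove (pVarSet p (M * Δ) h)) (hr : r ∈ Set.Ioo 0 Δ) :
    ∑ k ∈ range M, |h ((k + 1) * Δ) - h (k * Δ + r)| ≤
      (M : ℝ) ^ ((p - 1) / p) * pVarNorm p (M * Δ) h := by
  have hp0 : 0 < p := one_pos.trans_le hp
  have hV := pVarNorm_nonneg (by have := hr.1.trans hr.2; positivity) hvar
  have hS : 0 ≤ ∑ k ∈ range M, |h ((k + 1) * Δ) - h (k * Δ + r)| :=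
    sum_nonneg fun _ _ ↦ abs_nonneg _
  refine (Real.rpow_le_rpow_iff hS (by positivity) hp0).mp ?_
  calc (∑ k ∈ range M, |h ((k + 1) * Δ) - h (k * Δ + r)|) ^ p
      ≤ (M : ℝ) ^ (p - 1) * ∑ k ∈ range M, |h ((k + 1) * Δ) - h (k * Δ + r)| ^ p := by
        simpa using Real.rpow_sum_le_const_mul_sum_rpow_of_nonneg (s := range M) hp
          fun _ _ ↦ abs_nonneg _
    _ ≤ (M : ℝ) ^ (p - 1) * pVarNorm p (M * Δ) h ^ p := by
        gcongr
        exact sum_rpow_abs_sub_shiftedGrid_le hp0 hM hvar hr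
    _ = ((M : ℝ) ^ ((p - 1) / p) * pVarNorm p (M * Δ) h) ^ p := by
        rw [Real.mul_rpow (by positivity) hV, ← Real.rpow_mul (by positivity),
          div_mul_cancel₀ _ hp0.ne']

end pVariation

/-- if `h` has finite `p`-variation on `[0,T]` (`p ≥ 1`) and
`Δ = T/M`, then `∫_0^{T−Δ} |h((t)_Δ + Δ) − h(t)| dt
  ≤ ‖h‖_{p-var,T} · T^{(p−1)/p} · Δ^{1/p}`, with `(t)_Δ = ⌊t/Δ⌋·Δ`. -/
theorem stmt18 (p T : ℝ) (M : ℕ) (h : ℝ → ℝ) (hp : 1 ≤ p) (hT : 0 < T) (hM : 0 < M)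
    (hvar : BddAbove (pVarSet p T h)) :
    (∫ t in (0:ℝ)..(T - T / M), |h ((⌊t / (T / M)⌋ : ℝ) * (T / M) + T / M) - h t|) ≤
      pVarNorm p T h * T ^ ((p - 1) / p) * (T / M) ^ (1 / p) := by
  generalize hΔ : T / M = Δ
  have hΔ0 : 0 < Δ := hΔ ▸ by positivity
  obtain rfl : T = M * Δ := by rw [← hΔ]; field_simp
  set V := pVarNorm p (M * Δ) h
  have hV : 0 ≤ V := pVarNorm_nonneg hT hvar
  have hgrid : (M : ℝ) * Δ - Δ = (M - 1 : ℕ) * Δ := by rw [Nat.cast_pred hM]; ring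
  rw [hgrid]
  by_cases hint :
      IntervalIntegrable (fun t ↦ |h (⌊t / Δ⌋ * Δ + Δ) - h t|) volume 0 ((M - 1 : ℕ) * Δ)
  swap
  · rw [intervalIntegral.integral_undef hint]
    positivity
  have hbound : ∀ r ∈ Set.Ioo 0 Δ, ‖∑ k ∈ range (M - 1),
      |h (⌊(k * Δ + r) / Δ⌋ * Δ + Δ) - h (k * Δ + r)|‖ ≤ (M : ℝ) ^ ((p - 1) / p) * V := by
    intro r hr
    simp only [floor_natCast_mul_add_div (Set.Ioo_subset_Ico_self hr), Int.cast_natCast,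
      ← add_one_mul, Real.norm_of_nonneg (sum_nonneg fun _ _ ↦ abs_nonneg _)]
    exact (sum_le_sum_of_subset_of_nonneg (range_subset_range.mpr (M.sub_le 1))
      fun _ _ _ ↦ abs_nonneg _).trans (sum_abs_sub_shiftedGrid_le hp hM hvar hr)
  rw [intervalIntegral_eq_integral_sum_comp_add hΔ0.le _ hint]
  calc _ ≤ Δ * ((M : ℝ) ^ ((p - 1) / p) * V) :=
        (Real.le_norm_self _).trans
          ((norm_integral_le_of_norm_le_const_on_Ioo hΔ0.le hbound).trans_eq (by rw [sub_zero]))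
    _ = V * (M * Δ) ^ ((p - 1) / p) * Δ ^ (1 / p) := by
        rw [← mul_assoc, mul_rpow_sub_one_div (by linarith) (Nat.cast_nonneg M) hΔ0]
        ring
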